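/- Let a ∈ ℂ and let t, z ∈ ℂ satisfy t−z ∉ (−∞,0]. Define f(z,t) = e^{t²} (t−z)^{−a} using the principal branch of (t−z)^{−a}. Then ∂_z² f(z,t) − 2z ∂_z f(z,t) − 2a f(z,t) = −a ∂_t [ e^{t²} (t−z)^{−a−1} ]. -/

import Mathlib

open Complex

/-! On the slit plane `∂_z (t-z)^c = -c (t-z)^(c-1)`, so after
differentiating both sides are combinations of `(t-z)^(-a)`, `(t-z)^(-a-1)` and `(t-z)^(-a-2)`,
and they agree once `(t-z)^(-a) = (t-z) (t-z)^(-a-1)` is used. -/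

theorem cpow_eq_mul_cpow_sub_one {x : ℂ} (hx : x ≠ 0) (c : ℂ) : x ^ c = x * x ^ (c - 1) := by
  rw [cpow_sub _ _ hx, cpow_one, mul_div_cancel₀ _ hx]

theorem hasDerivAt_const_sub_cpow {t w : ℂ} (c : ℂ) (h : t - w ∈ slitPlane) :
    HasDerivAt (fun w => (t - w) ^ c) (-c * (t - w) ^ (c - 1)) w := by
  convert ((hasDerivAt_id' w).const_sub t).cpow_const (c := c) h using 1
  ring

theorem deriv_deriv_const_sub_cpow {t w : ℂ} (c : ℂ) (h : t - w ∈ slitPlane) :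
    deriv (deriv fun w => (t - w) ^ c) w = c * (c - 1) * (t - w) ^ (c - 1 - 1) := by
  have hderiv : deriv (fun w => (t - w) ^ c) =ᶠ[nhds w] fun w => -c * (t - w) ^ (c - 1) := by
    have hopen : IsOpen {w : ℂ | t - w ∈ slitPlane} :=
      isOpen_slitPlane.preimage (continuous_const.sub continuous_id)
    filter_upwards [hopen.mem_nhds h] with v hv
    exact (hasDerivAt_const_sub_cpow c hv).deriv
  rw [hderiv.deriv_eq, deriv_const_mul_field']
  dsimp only
  rw [(hasDerivAt_const_sub_cpow (c - 1) h).deriv]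
  ring

theorem hasDerivAt_exp_sq_mul_sub_cpow {t z : ℂ} (c : ℂ) (h : t - z ∈ slitPlane) :
    HasDerivAt (fun s => exp (s ^ 2) * (s - z) ^ c)
      (exp (t ^ 2) * (2 * t * (t - z) ^ c + c * (t - z) ^ (c - 1))) t := by
  have hexp : HasDerivAt (fun s => exp (s ^ 2)) (exp (t ^ 2) * (2 * t)) t := by
    simpa using (hasDerivAt_pow 2 t).cexp
  have hpow : HasDerivAt (fun s => (s - z) ^ c) (c * (t - z) ^ (c - 1)) t := by
    simpa using ((hasDerivAt_id t).sub_const z).cpow_const (c := c) h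
  exact (hexp.mul hpow).congr_deriv (by ring)

/-- the Hermite operator applied in `z` to
`f(z,t) = e^(t²) (t-z)^(-a)` equals `-a ∂_t [ e^(t²) (t-z)^(-a-1) ]`. -/
theorem hermite_integrand_identity (a : ℂ) (t z : ℂ)
    (htz : (t - z) ∈ Complex.slitPlane) :
    deriv (deriv (fun w : ℂ => Complex.exp (t ^ 2) * (t - w) ^ (-a))) z
      - 2 * z * deriv (fun w : ℂ => Complex.exp (t ^ 2) * (t - w) ^ (-a)) z
      - 2 * a * (Complex.exp (t ^ 2) * (t - z) ^ (-a))
    = -a * deriv (fun s : ℂ =>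
        Complex.exp (s ^ 2) * (s - z) ^ (-a - 1)) t := by
  simp only [deriv_const_mul_field']
  rw [deriv_deriv_const_sub_cpow _ htz, (hasDerivAt_const_sub_cpow _ htz).deriv,
    (hasDerivAt_exp_sq_mul_sub_cpow _ htz).deriv,
    cpow_eq_mul_cpow_sub_one (slitPlane_ne_zero htz) (-a)]
  ring
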